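/- arXiv:1802.06820 — 7 statements merged into one kernel-verified Lean document; each statement's English description precedes it below -/
import Mathlib

section
/- Let M be a motif set whose instances each have exactly 3 anchor nodes, and let W_M be the motif adjacency matrix. Then for every subset S of vertices, the number of motif instances cut by S (instances with at least one anchor in S and at least one anchor in the complement of S) equals half the weighted edge cut of S in the graph with weights W_M: cut_M(S, S̄) = (1/2)·Σ_{i∈S, j∉S} (W_M)_{ij}. -/
theorem stmt_6 {V ι : Type*} [Fintype V] [DecidableEq V] [Fintype ι]
    (anchor : ι → Finset V)
    (hcard : ∀ a, (anchor a).card = 3)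
    (W : V → V → ℕ)
    (hW : ∀ i j, i ≠ j →
      W i j = (Finset.univ.filter (fun a : ι => i ∈ anchor a ∧ j ∈ anchor a)).card)
    (hWdiag : ∀ i, W i i = 0)
    (S : Finset V) :
    (((Finset.univ.filter
        (fun a : ι => (anchor a ∩ S).Nonempty ∧ (anchor a ∩ Sᶜ).Nonempty)).card : ℕ) : ℝ)
      = (1 / 2) * ∑ i ∈ S, ∑ j ∈ Sᶜ, (W i j : ℝ) := by
  have key : ∑ i ∈ S, ∑ j ∈ Sᶜ, W i j
      = 2 * (Finset.univ.filter
        (fun a : ι => (anchor a ∩ S).Nonempty ∧ (anchor a ∩ Sᶜ).Nonempty)).card := by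
    have h1 : ∑ i ∈ S, ∑ j ∈ Sᶜ, W i j
        = ∑ a : ι, (anchor a ∩ S).card * (anchor a ∩ Sᶜ).card := by
      have : ∀ i ∈ S, ∀ j ∈ Sᶜ, W i j
          = ∑ a : ι, (if i ∈ anchor a then 1 else 0) * (if j ∈ anchor a then 1 else 0) := by
        intro i hi j hj
        have hij : i ≠ j := by
          intro h; subst h; exact (Finset.mem_compl.mp hj) hi
        rw [hW i j hij, Finset.card_filter]
        apply Finset.sum_congr rfl
        intro a _
        by_cases h1 : i ∈ anchor a <;> by_cases h2 : j ∈ anchor a <;> simp [h1, h2]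
      calc ∑ i ∈ S, ∑ j ∈ Sᶜ, W i j
          = ∑ i ∈ S, ∑ j ∈ Sᶜ, ∑ a : ι,
              (if i ∈ anchor a then 1 else 0) * (if j ∈ anchor a then 1 else 0) := by
            apply Finset.sum_congr rfl; intro i hi
            apply Finset.sum_congr rfl; intro j hj
            exact this i hi j hj
        _ = ∑ a : ι, ∑ i ∈ S, ∑ j ∈ Sᶜ,
              (if i ∈ anchor a then 1 else 0) * (if j ∈ anchor a then 1 else 0) := by
            rw [Finset.sum_congr rfl fun i _ => Finset.sum_comm, Finset.sum_comm]
        _ = ∑ a : ι, (anchor a ∩ S).card * (anchor a ∩ Sᶜ).card := by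
            apply Finset.sum_congr rfl; intro a _
            rw [← Finset.sum_mul_sum]
            congr 1
            · rw [Finset.sum_ite_mem, Finset.sum_const, smul_eq_mul, mul_one,
                Finset.inter_comm]
            · rw [Finset.sum_ite_mem, Finset.sum_const, smul_eq_mul, mul_one,
                Finset.inter_comm]
    rw [h1]
    have h2 : ∀ a : ι, (anchor a ∩ S).card * (anchor a ∩ Sᶜ).card
        = if (anchor a ∩ S).Nonempty ∧ (anchor a ∩ Sᶜ).Nonempty then 2 else 0 := by
      intro a
      have hsum : (anchor a ∩ S).card + (anchor a ∩ Sᶜ).card = 3 := by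
        rw [← hcard a]
        have : anchor a ∩ Sᶜ = (anchor a) \ (anchor a ∩ S) := by
          ext x; simp [Finset.mem_compl]
        rw [this, Finset.card_sdiff_of_subset (Finset.inter_subset_left)]
        have hle : (anchor a ∩ S).card ≤ (anchor a).card :=
          Finset.card_le_card Finset.inter_subset_left
        omega
      by_cases hA : (anchor a ∩ S).Nonempty
      · by_cases hB : (anchor a ∩ Sᶜ).Nonempty
        · simp only [hA, hB, and_self, if_true]
          have h1 := Finset.card_pos.mpr hA
          have h2 := Finset.card_pos.mpr hB
          have hc : (anchor a ∩ S).card = 1 ∨ (anchor a ∩ S).card = 2 := by omega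
          rcases hc with hc | hc <;> rw [hc] <;> omega
        · simp only [hB, and_false, if_false]
          rw [Finset.not_nonempty_iff_eq_empty] at hB
          simp [hB]
      · simp only [hA, false_and, if_false]
        rw [Finset.not_nonempty_iff_eq_empty] at hA
        simp [hA]
    rw [Finset.sum_congr rfl (fun a _ => h2 a)]
    rw [Finset.sum_ite, Finset.sum_const, Finset.sum_const]
    simp [mul_comm]
  have : ∑ i ∈ S, ∑ j ∈ Sᶜ, (W i j : ℝ) = ((∑ i ∈ S, ∑ j ∈ Sᶜ, W i j : ℕ) : ℝ) := by
    push_cast; ring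
  rw [this, key]
  push_cast
  ring
end

section
/- Let M be a motif set whose instances each have exactly 3 anchor nodes and let W_M be the motif adjacency matrix. Then for every subset S of vertices with vol_M(S) > 0 and vol_M(S̄) > 0, the motif conductance φ_M(S) = cut_M(S,S̄)/min(vol_M(S), vol_M(S̄)) equals the edge conductance of S in the weighted graph with adjacency matrix W_M. -/
theorem stmt_7 {V ι : Type*} [Fintype V] [DecidableEq V] [Fintype ι]
    (anchor : ι → Finset V)
    (hcard : ∀ a, (anchor a).card = 3)
    (W : V → V → ℕ)
    (hW : ∀ i j, i ≠ j →
      W i j = (Finset.univ.filter (fun a : ι => i ∈ anchor a ∧ j ∈ anchor a)).card)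
    (hWdiag : ∀ i, W i i = 0)
    (S : Finset V)
    (hvolS : 0 < ∑ a : ι, (anchor a ∩ S).card)
    (hvolSc : 0 < ∑ a : ι, (anchor a ∩ Sᶜ).card) :
    ((Finset.univ.filter
        (fun a : ι => (anchor a ∩ S).Nonempty ∧ (anchor a ∩ Sᶜ).Nonempty)).card : ℝ)
        / min ((∑ a : ι, (anchor a ∩ S).card : ℕ) : ℝ) ((∑ a : ι, (anchor a ∩ Sᶜ).card : ℕ) : ℝ)
      = (∑ i ∈ S, ∑ j ∈ Sᶜ, (W i j : ℝ))
        / min (∑ i ∈ S, ∑ j, (W i j : ℝ)) (∑ i ∈ Sᶜ, ∑ j, (W i j : ℝ)) := by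
  classical
  -- volume lemma
  have hrow : ∀ i, ∑ j, W i j = ∑ a : ι, (if i ∈ anchor a then 2 else 0) := by
    intro i
    rw [← Finset.sum_erase Finset.univ (hWdiag i)]
    calc ∑ j ∈ Finset.univ.erase i, W i j
        = ∑ j ∈ Finset.univ.erase i, ∑ a : ι,
            (if i ∈ anchor a ∧ j ∈ anchor a then 1 else 0) := by
          refine Finset.sum_congr rfl fun j hj => ?_
          rw [hW i j (Finset.ne_of_mem_erase hj).symm, Finset.card_filter]
      _ = ∑ a : ι, ∑ j ∈ Finset.univ.erase i,
            (if i ∈ anchor a ∧ j ∈ anchor a then 1 else 0) := Finset.sum_comm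
      _ = ∑ a : ι, (if i ∈ anchor a then 2 else 0) := by
          refine Finset.sum_congr rfl fun a _ => ?_
          by_cases hi : i ∈ anchor a
          · simp only [hi, true_and, if_pos]
            have h1 : ∑ j ∈ Finset.univ.erase i, (if j ∈ anchor a then 1 else 0)
                = ((Finset.univ.erase i).filter (· ∈ anchor a)).card :=
              (Finset.card_filter _ _).symm
            have h2 : (Finset.univ.erase i).filter (· ∈ anchor a) = (anchor a).erase i := by
              ext x; simp [Finset.mem_erase, and_comm]
            rw [h1, h2, Finset.card_erase_of_mem hi, hcard]
          · simp [hi]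
  have hvol : ∀ T : Finset V, ∑ i ∈ T, ∑ j, W i j = 2 * ∑ a : ι, (anchor a ∩ T).card := by
    intro T
    calc ∑ i ∈ T, ∑ j, W i j
        = ∑ i ∈ T, ∑ a : ι, (if i ∈ anchor a then 2 else 0) :=
          Finset.sum_congr rfl fun i _ => hrow i
      _ = ∑ a : ι, ∑ i ∈ T, (if i ∈ anchor a then 2 else 0) := Finset.sum_comm
      _ = 2 * ∑ a : ι, (anchor a ∩ T).card := by
          rw [Finset.mul_sum]
          refine Finset.sum_congr rfl fun a _ => ?_
          rw [← Finset.sum_filter, Finset.sum_const, smul_eq_mul,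
            Finset.filter_mem_eq_inter, Finset.inter_comm]
          ring
  -- cut lemma
  have hcut : ∑ i ∈ S, ∑ j ∈ Sᶜ, W i j
      = 2 * (Finset.univ.filter
          (fun a : ι => (anchor a ∩ S).Nonempty ∧ (anchor a ∩ Sᶜ).Nonempty)).card := by
    calc ∑ i ∈ S, ∑ j ∈ Sᶜ, W i j
        = ∑ i ∈ S, ∑ j ∈ Sᶜ, ∑ a : ι,
            ((if i ∈ anchor a then 1 else 0) * (if j ∈ anchor a then 1 else 0)) := by
          refine Finset.sum_congr rfl fun i hi => Finset.sum_congr rfl fun j hj => ?_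
          have hij : i ≠ j := by
            rintro rfl; exact (Finset.mem_compl.mp hj) hi
          rw [hW i j hij, Finset.card_filter]
          refine Finset.sum_congr rfl fun a _ => ?_
          by_cases h1 : i ∈ anchor a <;> by_cases h2 : j ∈ anchor a <;> simp [h1, h2]
      _ = ∑ i ∈ S, ∑ a : ι, ∑ j ∈ Sᶜ,
            ((if i ∈ anchor a then 1 else 0) * (if j ∈ anchor a then 1 else 0)) :=
          Finset.sum_congr rfl fun i _ => Finset.sum_comm
      _ = ∑ a : ι, ∑ i ∈ S, ∑ j ∈ Sᶜ,
            ((if i ∈ anchor a then 1 else 0) * (if j ∈ anchor a then 1 else 0)) :=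
          Finset.sum_comm
      _ = ∑ a : ι, (anchor a ∩ S).card * (anchor a ∩ Sᶜ).card := by
          refine Finset.sum_congr rfl fun a _ => ?_
          rw [← Finset.sum_mul_sum S Sᶜ (fun i => if i ∈ anchor a then 1 else 0)
            (fun j => if j ∈ anchor a then 1 else 0)]
          congr 1 <;>
          · rw [← Finset.sum_filter, Finset.sum_const, smul_eq_mul, mul_one,
              Finset.filter_mem_eq_inter, Finset.inter_comm]
      _ = ∑ a : ι, (if (anchor a ∩ S).Nonempty ∧ (anchor a ∩ Sᶜ).Nonempty then 2 else 0) := by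
          refine Finset.sum_congr rfl fun a _ => ?_
          have hxy : (anchor a ∩ S).card + (anchor a ∩ Sᶜ).card = 3 := by
            have : (anchor a).filter (· ∈ S) = anchor a ∩ S := Finset.filter_mem_eq_inter
            have h2 : (anchor a).filter (fun x => ¬ x ∈ S) = anchor a ∩ Sᶜ := by
              ext x; simp [Finset.mem_compl]
            rw [← this, ← h2, Finset.card_filter_add_card_filter_not, hcard]
          by_cases h1 : (anchor a ∩ S).Nonempty
          · by_cases h2 : (anchor a ∩ Sᶜ).Nonempty
            · simp only [h1, h2, and_self, if_true]
              have hx := Finset.card_pos.mpr h1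
              have hy := Finset.card_pos.mpr h2
              have hxle : (anchor a ∩ S).card ≤ 2 := by omega
              interval_cases h : (anchor a ∩ S).card <;> omega
            · simp only [h2, and_false, if_false]
              rw [Finset.not_nonempty_iff_eq_empty.mp h2]
              simp
          · simp only [h1, false_and, if_false]
            rw [Finset.not_nonempty_iff_eq_empty.mp h1]
            simp
      _ = 2 * (Finset.univ.filter
          (fun a : ι => (anchor a ∩ S).Nonempty ∧ (anchor a ∩ Sᶜ).Nonempty)).card := by
          rw [← Finset.sum_filter, Finset.sum_const, smul_eq_mul, mul_comm]
  -- pass to ℝ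
  set c := (Finset.univ.filter
      (fun a : ι => (anchor a ∩ S).Nonempty ∧ (anchor a ∩ Sᶜ).Nonempty)).card
  set v1 := ∑ a : ι, (anchor a ∩ S).card
  set v2 := ∑ a : ι, (anchor a ∩ Sᶜ).card
  have e1 : (∑ i ∈ S, ∑ j ∈ Sᶜ, (W i j : ℝ)) = 2 * (c : ℝ) := by
    have h : ((∑ i ∈ S, ∑ j ∈ Sᶜ, W i j : ℕ) : ℝ) = ∑ i ∈ S, ∑ j ∈ Sᶜ, (W i j : ℝ) := by
      push_cast; rfl
    rw [← h, hcut]; push_cast; ring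
  have e2 : (∑ i ∈ S, ∑ j, (W i j : ℝ)) = 2 * (v1 : ℝ) := by
    have h : ((∑ i ∈ S, ∑ j, W i j : ℕ) : ℝ) = ∑ i ∈ S, ∑ j, (W i j : ℝ) := by
      push_cast; rfl
    rw [← h, hvol S]; unfold v1; push_cast; ring
  have e3 : (∑ i ∈ Sᶜ, ∑ j, (W i j : ℝ)) = 2 * (v2 : ℝ) := by
    have h : ((∑ i ∈ Sᶜ, ∑ j, W i j : ℕ) : ℝ) = ∑ i ∈ Sᶜ, ∑ j, (W i j : ℝ) := by
      push_cast; rfl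
    rw [← h, hvol Sᶜ]; unfold v2; push_cast; ring
  rw [e1, e2, e3]
  have hmin : min (2 * (v1 : ℝ)) (2 * (v2 : ℝ)) = 2 * min (v1 : ℝ) (v2 : ℝ) := by
    rcases le_total (v1 : ℝ) (v2 : ℝ) with h | h
    · rw [min_eq_left h, min_eq_left (by linarith)]
    · rw [min_eq_right h, min_eq_right (by linarith)]
  rw [hmin, mul_div_mul_left _ _ (two_ne_zero)]
end

section
/- Let M be a motif set whose instances each have exactly 4 anchor nodes, and let W_M be the motif adjacency matrix. Then for every subset S of vertices, cut_M(S,S̄) = (1/3)·edgecut_{W_M}(S,S̄) - (1/3)·#{instances A : |A ∩ S| = 2}, where cut_M(S,S̄) counts instances with anchors on both sides, and edgecut_{W_M}(S,S̄) = Σ_{i∈S,j∉S}(W_M)_{ij}. -/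
theorem stmt_8 {V ι : Type*} [Fintype V] [DecidableEq V] [Fintype ι]
    (anchor : ι → Finset V)
    (hcard : ∀ a, (anchor a).card = 4)
    (W : V → V → ℕ)
    (hW : ∀ i j, i ≠ j →
      W i j = (Finset.univ.filter (fun a : ι => i ∈ anchor a ∧ j ∈ anchor a)).card)
    (hWdiag : ∀ i, W i i = 0)
    (S : Finset V) :
    ((Finset.univ.filter
        (fun a : ι => (anchor a ∩ S).Nonempty ∧ (anchor a ∩ Sᶜ).Nonempty)).card : ℝ)
      = (1 / 3) * (∑ i ∈ S, ∑ j ∈ Sᶜ, (W i j : ℝ))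
        - (1 / 3) * ((Finset.univ.filter (fun a : ι => (anchor a ∩ S).card = 2)).card : ℝ) := by
  have hc : ∀ (T : Finset V) (a : ι),
      (anchor a ∩ T).card = ∑ i ∈ T, (if i ∈ anchor a then 1 else 0) := by
    intro T a
    rw [Finset.inter_comm, ← Finset.filter_mem_eq_inter, Finset.card_filter]
  have hsum : (∑ i ∈ S, ∑ j ∈ Sᶜ, W i j)
      = ∑ a : ι, (anchor a ∩ S).card * (anchor a ∩ Sᶜ).card := by
    calc (∑ i ∈ S, ∑ j ∈ Sᶜ, W i j)
        = ∑ i ∈ S, ∑ j ∈ Sᶜ, ∑ a : ι,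
            ((if i ∈ anchor a then 1 else 0) * (if j ∈ anchor a then 1 else 0)) := by
          refine Finset.sum_congr rfl fun i hi => Finset.sum_congr rfl fun j hj => ?_
          have hij : i ≠ j := by
            intro h; subst h
            exact (Finset.mem_compl.mp hj) hi
          rw [hW i j hij, Finset.card_filter]
          refine Finset.sum_congr rfl fun a _ => ?_
          by_cases h1 : i ∈ anchor a <;> by_cases h2 : j ∈ anchor a <;> simp [h1, h2]
      _ = ∑ i ∈ S, ∑ a : ι, ∑ j ∈ Sᶜ,
            ((if i ∈ anchor a then 1 else 0) * (if j ∈ anchor a then 1 else 0)) :=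
          Finset.sum_congr rfl fun i _ => Finset.sum_comm
      _ = ∑ a : ι, ∑ i ∈ S, ∑ j ∈ Sᶜ,
            ((if i ∈ anchor a then 1 else 0) * (if j ∈ anchor a then 1 else 0)) :=
          Finset.sum_comm
      _ = ∑ a : ι, (anchor a ∩ S).card * (anchor a ∩ Sᶜ).card := by
          refine Finset.sum_congr rfl fun a _ => ?_
          rw [hc S a, hc Sᶜ a, Finset.sum_mul_sum]
  have key : ∀ a : ι,
      3 * (if (anchor a ∩ S).Nonempty ∧ (anchor a ∩ Sᶜ).Nonempty then 1 else 0)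
        + (if (anchor a ∩ S).card = 2 then 1 else 0)
      = (anchor a ∩ S).card * (anchor a ∩ Sᶜ).card := by
    intro a
    have h4 : (anchor a ∩ S).card + (anchor a ∩ Sᶜ).card = 4 := by
      have e1 : anchor a ∩ S = (anchor a).filter (· ∈ S) :=
        (Finset.filter_mem_eq_inter).symm
      have e2 : anchor a ∩ Sᶜ = (anchor a).filter (fun x => ¬ x ∈ S) := by
        rw [← Finset.filter_mem_eq_inter]
        exact Finset.filter_congr fun x _ => by simp
      rw [e1, e2, Finset.card_filter_add_card_filter_not, hcard]
    have hn1 : (anchor a ∩ S).Nonempty ↔ 0 < (anchor a ∩ S).card :=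
      Finset.card_pos.symm
    have hn2 : (anchor a ∩ Sᶜ).Nonempty ↔ 0 < (anchor a ∩ Sᶜ).card :=
      Finset.card_pos.symm
    simp only [hn1, hn2]
    have hk4 : (anchor a ∩ S).card ≤ 4 := by omega
    interval_cases h : (anchor a ∩ S).card <;> split_ifs <;>
      first | omega | exact (False.elim (by assumption))
  have hnat : 3 * (Finset.univ.filter
        (fun a : ι => (anchor a ∩ S).Nonempty ∧ (anchor a ∩ Sᶜ).Nonempty)).card
      + (Finset.univ.filter (fun a : ι => (anchor a ∩ S).card = 2)).card
      = ∑ i ∈ S, ∑ j ∈ Sᶜ, W i j := by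
    rw [hsum, Finset.card_filter, Finset.card_filter, Finset.mul_sum,
      ← Finset.sum_add_distrib]
    exact Finset.sum_congr rfl fun a _ => key a
  have hcast : (∑ i ∈ S, ∑ j ∈ Sᶜ, (W i j : ℝ))
      = ((∑ i ∈ S, ∑ j ∈ Sᶜ, W i j : ℕ) : ℝ) := by push_cast; rfl
  rw [hcast, ← hnat]
  push_cast
  ring
end

section
/- For any node u in a simple graph and any ℓ ≥ 2, the product of local clustering coefficients C_2(u)·C_3(u)···C_ℓ(u) equals the ℓ-clique density of the 1-hop neighborhood graph of u: Π_{j=2}^{ℓ} C_j(u) = |K_ℓ(N_u)| / C(d_u, ℓ), where N_u is the subgraph induced on the neighbors of u (excluding u). -/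
/-- The number of `j`-cliques in the 1-hop neighborhood graph of `u`
(the subgraph induced on the neighbors of `u`, excluding `u`). -/
noncomputable def nbrCliqueCount {V : Type*} [Fintype V] (G : SimpleGraph V) (u : V) (j : ℕ) : ℕ :=
  {s : Finset V | ↑s ⊆ G.neighborSet u ∧ G.IsNClique j s}.ncard

/-- The local `ℓ`th-order clustering coefficient of `u`:
`C_ℓ(u) = ℓ·|K_ℓ(N_u)| / ((d_u - ℓ + 1)·|K_{ℓ-1}(N_u)|)`. -/
noncomputable def localCC {V : Type*} [Fintype V] (G : SimpleGraph V) (u : V) (ℓ : ℕ) : ℝ :=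
  ((ℓ : ℝ) * nbrCliqueCount G u ℓ) /
    ((((G.neighborSet u).ncard : ℝ) - ℓ + 1) * nbrCliqueCount G u (ℓ - 1))

lemma nbrCliqueCount_one {V : Type*} [Fintype V] (G : SimpleGraph V) (u : V) :
    nbrCliqueCount G u 1 = (G.neighborSet u).ncard := by
  have h : {s : Finset V | ↑s ⊆ G.neighborSet u ∧ G.IsNClique 1 s}
      = (fun a => ({a} : Finset V)) '' (G.neighborSet u) := by
    ext s
    simp only [Set.mem_setOf_eq, SimpleGraph.isNClique_one, Set.mem_image]
    constructor
    · rintro ⟨hsub, a, rfl⟩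
      exact ⟨a, hsub (by simp), rfl⟩
    · rintro ⟨a, ha, rfl⟩
      exact ⟨by simpa using ha, a, rfl⟩
  rw [nbrCliqueCount, h, Set.ncard_image_of_injective _ (fun a b h => by simpa using h)]

theorem stmt_10 {V : Type*} [Fintype V] (G : SimpleGraph V) (u : V) (ℓ : ℕ)
    (hℓ : 2 ≤ ℓ)
    (hpos : ∀ j ∈ Finset.Icc 2 ℓ,
      0 < (((G.neighborSet u).ncard : ℝ) - j + 1) * nbrCliqueCount G u (j - 1)) :
    ∏ j ∈ Finset.Icc 2 ℓ, localCC G u j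
      = (nbrCliqueCount G u ℓ : ℝ) / ((G.neighborSet u).ncard.choose ℓ : ℝ) := by
  set d := (G.neighborSet u).ncard with hd
  induction ℓ, hℓ using Nat.le_induction with
  | base =>
    have h2 := hpos 2 (by simp)
    rw [nbrCliqueCount_one, ← hd] at h2
    have hd1 : (1:ℝ) < d := by
      rcases lt_or_ge (1:ℝ) (d:ℝ) with h | h
      · exact h
      · push_cast at h2; nlinarith [Nat.cast_nonneg (α := ℝ) d]
    have h0 : (0:ℝ) < (d:ℝ) := by linarith
    rw [Finset.Icc_self, Finset.prod_singleton, localCC, nbrCliqueCount_one, ← hd,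
      Nat.cast_choose_two]
    rw [div_eq_div_iff (by push_cast; nlinarith) (by nlinarith)]
    push_cast
    ring
  | succ n hn ih =>
    rw [Finset.prod_Icc_succ_top (by omega), ih (fun j hj => hpos j (by
      simp only [Finset.mem_Icc] at hj ⊢; omega))]
    have hlast := hpos (n+1) (by simp; omega)
    simp only [Nat.add_sub_cancel] at hlast
    have hK0 : nbrCliqueCount G u n ≠ 0 := by
      intro h; rw [h] at hlast; simp at hlast
    have hKn : (0:ℝ) < nbrCliqueCount G u n := by
      exact_mod_cast Nat.pos_of_ne_zero hK0
    have hdn0 : (0:ℝ) < (d:ℝ) - (n+1) + 1 := by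
      by_contra h
      push_neg at h
      have hmul := mul_nonpos_of_nonpos_of_nonneg h hKn.le
      push_cast at hlast
      linarith
    have hnd : n + 1 ≤ d := by
      have : ((n:ℝ)+1) - 1 < d := by push_cast at hdn0 ⊢; linarith
      have h2 : (n:ℝ) < d := by linarith
      exact_mod_cast Nat.succ_le_of_lt (by exact_mod_cast h2)
    have hcn : (0:ℝ) < (d.choose n : ℝ) := by
      exact_mod_cast Nat.choose_pos (by omega)
    have hcn1 : (0:ℝ) < (d.choose (n+1) : ℝ) := by
      exact_mod_cast Nat.choose_pos hnd
    have hid : (d.choose (n+1) : ℝ) * (n+1) = (d.choose n : ℝ) * ((d:ℝ) - n) := by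
      have h := Nat.choose_succ_right_eq d n
      have hcast : ((d - n : ℕ) : ℝ) = (d:ℝ) - n := Nat.cast_sub (by omega)
      rw [← hcast]
      exact_mod_cast h
    rw [localCC]
    simp only [Nat.add_sub_cancel, ← hd]
    push_cast
    rw [div_mul_div_comm, div_eq_div_iff (by positivity) (by positivity)]
    linear_combination ((nbrCliqueCount G u n : ℝ) * (nbrCliqueCount G u (n+1) : ℝ)) * hid
end

section
/- For any node u in a simple graph and any fixed ℓ ≥ 3, the ℓth-order local clustering coefficient satisfies 0 ≤ C_ℓ(u) ≤ √(C_2(u)), where C_2(u) is the ordinary local clustering coefficient (edge density of the neighborhood of u). -/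
/-- The ordinary local clustering coefficient `C_2(u)`: the edge density of the
neighborhood graph `N_u`. -/
noncomputable def edgeDensityCC {V : Type*} [Fintype V] (G : SimpleGraph V) (u : V) : ℝ :=
  (nbrCliqueCount G u 2 : ℝ) / ((G.neighborSet u).ncard.choose 2 : ℝ)

open Finset
open scoped FinsetFamily

/-- Linear interpolation between `a.choose j` and `(a + 1).choose j`: a piecewise-linear stand-in
for the real binomial coefficient `(a + t).choose j` of Lovász's form of Kruskal–Katona. -/
noncomputable def linChoose (a : ℕ) (t : ℝ) (j : ℕ) : ℝ :=
  (1 - t) * a.choose j + t * (a + 1).choose j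

lemma linChoose_zero_right (a : ℕ) (t : ℝ) : linChoose a t 0 = 1 := by
  simp [linChoose]

lemma linChoose_succ_right (a : ℕ) (t : ℝ) (j : ℕ) :
    linChoose a t (j + 1) = a.choose (j + 1) + t * a.choose j := by
  simp only [linChoose, Nat.choose_succ_succ', Nat.cast_add]
  ring

lemma choose_le_linChoose (a : ℕ) {t : ℝ} (ht : 0 ≤ t) (j : ℕ) :
    (a.choose j : ℝ) ≤ linChoose a t j := by
  have : (a.choose j : ℝ) ≤ (a + 1).choose j := by exact_mod_cast Nat.choose_le_succ a j
  unfold linChoose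
  nlinarith

lemma linChoose_le_choose_succ (a : ℕ) {t : ℝ} (ht : t ≤ 1) (j : ℕ) :
    linChoose a t j ≤ (a + 1).choose j := by
  have : (a.choose j : ℝ) ≤ (a + 1).choose j := by exact_mod_cast Nat.choose_le_succ a j
  unfold linChoose
  nlinarith

lemma Nat.choose_succ_mul_choose_le {c a : ℕ} (h : c ≤ a) (k : ℕ) :
    c.choose (k + 1) * a.choose k ≤ c.choose k * a.choose (k + 1) := by
  refine Nat.le_of_mul_le_mul_right ?_ k.succ_pos
  calc c.choose (k + 1) * a.choose k * (k + 1)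
      = c.choose k * (c - k) * a.choose k := by rw [mul_right_comm, Nat.choose_succ_right_eq]
    _ ≤ c.choose k * (a - k) * a.choose k := by gcongr
    _ = c.choose k * a.choose (k + 1) * (k + 1) := by
        rw [mul_assoc, mul_assoc, Nat.choose_succ_right_eq, mul_comm (a - k)]

lemma Nat.cast_succ_mul_choose_succ {R : Type*} [CommRing R] (a k : ℕ) :
    ((k : R) + 1) * a.choose (k + 1) = ((a : R) - k) * a.choose k := by
  rcases le_or_gt k a with hka | hka
  · have h : ((a.choose (k + 1) * (k + 1) : ℕ) : R) = (a.choose k * (a - k) : ℕ) := by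
      rw [Nat.choose_succ_right_eq]
    push_cast [Nat.cast_sub hka] at h
    linear_combination h
  · simp [Nat.choose_eq_zero_of_lt hka, Nat.choose_eq_zero_of_lt (hka.trans k.lt_succ_self)]

lemma linChoose_succ_mul_choose_le {a b : ℕ} {u : ℝ} (hu0 : 0 ≤ u) (hu1 : u ≤ 1)
    (hba : (b : ℝ) + u ≤ a) (k : ℕ) :
    linChoose b u (k + 1) * a.choose k ≤ linChoose b u k * a.choose (k + 1) := by
  have hb : (b.choose (k + 1) * a.choose k : ℝ) ≤ b.choose k * a.choose (k + 1) := by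
    exact_mod_cast Nat.choose_succ_mul_choose_le (by exact_mod_cast (by linarith : (b : ℝ) ≤ a)) k
  rcases hu0.eq_or_lt with rfl | hu
  · simpa [linChoose] using hb
  have hb1 : ((b + 1).choose (k + 1) * a.choose k : ℝ) ≤ (b + 1).choose k * a.choose (k + 1) := by
    exact_mod_cast Nat.choose_succ_mul_choose_le
      (by exact_mod_cast (by linarith : (b : ℝ) < a) : b < a) k
  unfold linChoose
  nlinarith [mul_le_mul_of_nonneg_left hb (sub_nonneg.2 hu1), mul_le_mul_of_nonneg_left hb1 hu.le]

lemma exists_linChoose_eq {j d : ℕ} (hjd : j + 1 ≤ d) {T : ℝ} (hT1 : 1 ≤ T)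
    (hTd : T ≤ d.choose (j + 1)) :
    ∃ b u, j + 1 ≤ b ∧ 0 ≤ u ∧ u ≤ 1 ∧ (b : ℝ) + u ≤ d ∧ linChoose b u (j + 1) = T := by
  classical
  set P : ℕ → Prop := fun c ↦ (c.choose (j + 1) : ℝ) ≤ T
  have hP : P (j + 1) := by simpa [P] using hT1
  set b := Nat.findGreatest P d
  have hjb : j + 1 ≤ b := Nat.le_findGreatest hjd hP
  have hbT : (b.choose (j + 1) : ℝ) ≤ T := Nat.findGreatest_spec hjd hP
  have hbd : b ≤ d := Nat.findGreatest_le d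
  have hTb : b < d → T < (b + 1).choose (j + 1) := fun h ↦ by
    simpa [P] using Nat.findGreatest_is_greatest (Nat.lt_succ_self b) h
  clear_value b
  have hpos : (0 : ℝ) < b.choose j := by exact_mod_cast Nat.choose_pos (by omega)
  set u := (T - b.choose (j + 1)) / b.choose j
  have hu : u ≤ 1 ∧ (b : ℝ) + u ≤ d := by
    rcases hbd.eq_or_lt with rfl | hbd
    · have : u ≤ 0 := div_nonpos_of_nonpos_of_nonneg (by linarith) hpos.le
      constructor <;> linarith
    · have hlt := hTb hbd
      rw [Nat.choose_succ_succ', Nat.cast_add] at hlt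
      have hu1 : u ≤ 1 := by rw [div_le_one hpos]; linarith
      have : (b : ℝ) + 1 ≤ d := by exact_mod_cast hbd
      exact ⟨hu1, by linarith⟩
  refine ⟨b, u, hjb, div_nonneg (by linarith) hpos.le, hu.1, hu.2, ?_⟩
  rw [linChoose_succ_right, div_mul_cancel₀ _ hpos.ne']
  ring

/-- `N` and `S` stand for the sizes of an `(r + 1)`-uniform family and of its shadow. -/
def LovaszBound (r : ℕ) (N S : ℝ) : Prop :=
  ∀ b u, r + 1 ≤ b → 0 ≤ u → u ≤ 1 → linChoose b u (r + 1) ≤ N → linChoose b u r ≤ S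

lemma lovaszBound_zero {N S : ℝ} (hS : 1 ≤ S) : LovaszBound 0 N S :=
  fun b u _ _ _ _ ↦ by rwa [linChoose_zero_right]

namespace LovaszBound

variable {r : ℕ} {N S : ℝ}

lemma mono {S' : ℝ} (h : LovaszBound r N S) (hS : S ≤ S') : LovaszBound r N S' :=
  fun b u hb hu0 hu1 hN ↦ (h b u hb hu0 hu1 hN).trans hS

lemma succ_le (h : LovaszBound r N S) (hN : 1 ≤ N) : (r : ℝ) + 1 ≤ S := by
  simpa [linChoose, Nat.choose_succ_self_right] using
    h (r + 1) 0 le_rfl le_rfl zero_le_one (by simpa [linChoose] using hN)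

lemma mul_choose_le (h : LovaszBound r N S) (hN : 1 ≤ N) {a : ℕ} (ha : r + 1 ≤ a) {t : ℝ}
    (ht0 : 0 ≤ t) (ht1 : t ≤ 1) (hT : t * a.choose (r + 1) ≤ N) : t * a.choose r ≤ S := by
  have hpos : (0 : ℝ) < a.choose (r + 1) := by exact_mod_cast Nat.choose_pos ha
  -- Below `1` the bound `r + 1 ≤ S` suffices. Otherwise compare with the point of the curve
  -- `(linChoose b u (r + 1), linChoose b u r)` at height `t * a.choose (r + 1)`: the slope
  -- `linChoose b u r / linChoose b u (r + 1)` decreases as `b + u` grows towards `a`.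
  rcases lt_or_ge (t * a.choose (r + 1)) 1 with hT1 | hT1
  · have hchoose : (a.choose r : ℝ) ≤ (r + 1) * a.choose (r + 1) := by
      have ha' : (r : ℝ) + 1 ≤ a := by exact_mod_cast ha
      rw [Nat.cast_succ_mul_choose_succ]
      nlinarith [(Nat.cast_nonneg (a.choose r) : (0 : ℝ) ≤ _)]
    calc t * a.choose r ≤ (r + 1) * (t * a.choose (r + 1)) := by nlinarith
      _ ≤ (r + 1) * 1 := by gcongr
      _ ≤ S := by linarith [h.succ_le hN]
  · obtain ⟨b, u, hb, hu0, hu1, hba, hbu⟩ :=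
      exists_linChoose_eq ha hT1 (by nlinarith)
    have hratio := linChoose_succ_mul_choose_le hu0 hu1 hba r
    rw [hbu] at hratio
    have hS := h b u hb hu0 hu1 (hbu ▸ hT)
    have : t * a.choose r ≤ linChoose b u r :=
      le_of_mul_le_mul_right (by linarith) hpos
    linarith

lemma cascade (h : LovaszBound r N S) (hN1 : 1 ≤ N) {v : ℕ} (hv : r + 1 ≤ v)
    (hNv : N ≤ v.choose (r + 1)) :
    LovaszBound (r + 1) (v.choose (r + 2) + N) (v.choose (r + 1) + S) := by
  intro a t ha ht0 ht1 hF
  rw [linChoose_succ_right] at hF ⊢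
  have hS := h.succ_le hN1
  have htC : 0 ≤ t * a.choose (r + 1) := by positivity
  rcases lt_trichotomy v a with hva | rfl | hav
  -- For `v < a`, `N ≤ v.choose (r + 1)` leaves room in `hF` only for `a = v + 1` and `t = 0`.
  · obtain rfl : a = v + 1 := by
      by_contra hne
      have h1 : (v + 2).choose (r + 2) ≤ a.choose (r + 2) := Nat.choose_le_choose _ (by omega)
      have h2 : 0 < (v + 1).choose (r + 1) := Nat.choose_pos (by omega)
      have h3 : ((v + 2).choose (r + 2) : ℝ) ≤ a.choose (r + 2) := by exact_mod_cast h1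
      simp only [Nat.choose_succ_succ', Nat.cast_add] at h3
      have : (0 : ℝ) < (v + 1).choose (r + 1) := by exact_mod_cast h2
      linarith
    have hpos : (0 : ℝ) < (v + 1).choose (r + 1) := by exact_mod_cast Nat.choose_pos (by omega)
    have hpas (k : ℕ) : ((v + 1).choose (k + 1) : ℝ) = v.choose k + v.choose (k + 1) := by
      exact_mod_cast Nat.choose_succ_succ' v k
    rw [hpas (r + 1)] at hF
    rw [hpas r]
    obtain rfl : t = 0 := le_antisymm (nonpos_of_mul_nonpos_left (by linarith) hpos) ht0
    have := h v 0 hv le_rfl zero_le_one (by simp [linChoose]; linarith)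
    simp only [linChoose] at this
    linarith
  · linarith [h.mul_choose_le hN1 (by omega) ht0 ht1 (by linarith)]
  · have h1 := linChoose_le_choose_succ a ht1 (r + 1)
    rw [linChoose_succ_right] at h1
    have h2 : ((a + 1).choose (r + 1) : ℝ) ≤ v.choose (r + 1) := by
      exact_mod_cast Nat.choose_le_choose _ hav
    linarith

end LovaszBound

lemma Finset.exists_card_filter_le_eq {β : Type*} [LinearOrder β] (T : Finset β) {N : ℕ}
    (hN1 : 1 ≤ N) (hN : N ≤ #T) : ∃ x ∈ T, #{y ∈ T | y ≤ x} = N := by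
  induction N, hN1 using Nat.le_induction with
  | base =>
    have hT : T.Nonempty := card_pos.1 (by omega)
    refine ⟨T.min' hT, T.min'_mem hT, card_eq_one.2 ⟨T.min' hT, ?_⟩⟩
    ext y
    simp only [mem_filter, mem_singleton]
    refine ⟨fun hy ↦ le_antisymm hy.2 (T.min'_le y hy.1), ?_⟩
    rintro rfl
    exact ⟨T.min'_mem hT, le_rfl⟩
  | succ N _ ih =>
    obtain ⟨x, hxT, hx⟩ := ih (by omega)
    have hgt : ({y ∈ T | x < y} : Finset β).Nonempty := by
      by_contra! hempty
      have : {y ∈ T | y ≤ x} = T := filter_true_of_mem fun y hy ↦ by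
        by_contra! hxy
        exact (eq_empty_iff_forall_notMem.1 hempty) y (mem_filter.2 ⟨hy, hxy⟩)
      rw [this] at hx
      omega
    set z := min' _ hgt
    have hz : z ∈ T ∧ x < z := mem_filter.1 (min'_mem _ hgt)
    refine ⟨z, hz.1, ?_⟩
    have : {y ∈ T | y ≤ z} = insert z {y ∈ T | y ≤ x} := by
      ext y
      simp only [mem_filter, mem_insert]
      constructor
      · rintro ⟨hy, hyz⟩
        by_contra! hne
        exact hne.1 (le_antisymm hyz (min'_le _ _ (mem_filter.2 ⟨hy, hne.2 hy⟩)))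
      · rintro (rfl | ⟨hy, hyx⟩)
        exacts [⟨hz.1, le_rfl⟩, ⟨hy, hyx.trans hz.2.le⟩]
    rw [this, card_insert_of_notMem (by simp [hz.2]), hx]

namespace Finset.Colex

variable {n : ℕ}

lemma exists_card_initSeg_eq (r : ℕ) {N : ℕ} (hN1 : 1 ≤ N) (hN : N ≤ n.choose r) :
    ∃ s : Finset (Fin n), #s = r ∧ #(initSeg s) = N := by
  set T := (univ.powersetCard r : Finset (Finset (Fin n))).map toColex.toEmbedding
  obtain ⟨x, hxT, hx⟩ := T.exists_card_filter_le_eq hN1 (by simpa [T] using hN)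
  have hx' : #(ofColex x) = r := by simpa [T] using hxT
  refine ⟨ofColex x, hx', ?_⟩
  rw [← hx, ← card_map toColex.toEmbedding]
  congr 1
  ext y
  simp [T, hx', eq_comm]

variable {s : Finset (Fin n)} {v : Fin n}

lemma filter_notMem_initSeg (hv : v ∈ s) (hmax : ∀ x ∈ s, x ≤ v) :
    {t ∈ initSeg s | v ∉ t} = (Iio v).powersetCard #s := by
  ext t
  simp only [mem_filter, mem_initSeg, mem_powersetCard]
  constructor
  · rintro ⟨⟨hcard, hts⟩, hvt⟩
    refine ⟨fun x hx ↦ mem_Iio.2 ?_, hcard.symm⟩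
    exact (forall_le_mono hts hmax x hx).lt_of_ne fun h ↦ hvt (h ▸ hx)
  · rintro ⟨hsub, hcard⟩
    have hlt : ∀ x ∈ t, x < v := fun x hx ↦ mem_Iio.1 (hsub hx)
    refine ⟨⟨hcard.symm, (toColex_lt_toColex_iff_exists_forall_lt.2
      ⟨v, hv, fun h ↦ (hlt v h).false, fun x hx _ ↦ hlt x hx⟩).le⟩, fun h ↦ (hlt v h).false⟩

lemma card_filter_mem_initSeg (hv : v ∈ s) (hmax : ∀ x ∈ s, x ≤ v) :
    #{t ∈ initSeg s | v ∈ t} = #(initSeg (s.erase v)) := by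
  have hlt : ∀ x ∈ s.erase v, x < v := fun x hx ↦
    (hmax x (mem_of_mem_erase hx)).lt_of_ne (ne_of_mem_erase hx)
  have hcolex {t : Finset (Fin n)} (hvt : v ∈ t) :
      toColex (t.erase v) ≤ toColex (s.erase v) ↔ toColex t ≤ toColex s := by
    simpa only [sdiff_singleton_eq_erase] using
      toColex_sdiff_le_toColex_sdiff (singleton_subset_iff.2 hvt) (singleton_subset_iff.2 hv)
  have hvt {t : Finset (Fin n)} (ht : t ∈ initSeg (s.erase v)) : v ∉ t := fun h ↦
    (forall_lt_mono (mem_initSeg.1 ht).2 hlt v h).false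
  refine card_nbij' (fun t ↦ t.erase v) (insert v) ?_ ?_ ?_ ?_
  · intro t ht
    simp only [mem_coe, mem_filter, mem_initSeg] at ht
    simp only [mem_coe, mem_initSeg]
    refine ⟨?_, (hcolex ht.2).2 ht.1.2⟩
    rw [card_erase_of_mem hv, card_erase_of_mem ht.2, ht.1.1]
  · intro t ht
    have hv' := hvt ht
    simp only [mem_coe, mem_initSeg] at ht
    simp only [mem_coe, mem_filter, mem_initSeg, mem_insert_self, and_true]
    refine ⟨?_, (hcolex (mem_insert_self v t)).1 (by rw [erase_insert hv']; exact ht.2)⟩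
    rw [card_insert_of_notMem hv', ← ht.1, card_erase_add_one hv]
  · intro t ht
    exact insert_erase (mem_filter.1 ht).2
  · intro t ht
    exact erase_insert (hvt ht)

lemma card_initSeg_eq_choose_add (hv : v ∈ s) (hmax : ∀ x ∈ s, x ≤ v) :
    #(initSeg s) = (v : ℕ).choose #s + #(initSeg (s.erase v)) := by
  rw [← card_filter_add_card_filter_not (fun t ↦ v ∈ t), filter_notMem_initSeg hv hmax,
    card_filter_mem_initSeg hv hmax, card_powersetCard, Fin.card_Iio, add_comm]

lemma card_shadow_initSeg_eq_choose_add (hv : v ∈ s) (hmax : ∀ x ∈ s, x ≤ v) (hs : 2 ≤ #s) :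
    #(∂ (initSeg s)) = (v : ℕ).choose (#s - 1) + #(∂ (initSeg (s.erase v))) := by
  have hsne : s.Nonempty := ⟨v, hv⟩
  have hs'ne : (s.erase v).Nonempty := card_pos.1 (by rw [card_erase_of_mem hv]; omega)
  set m := s.min' hsne
  have hmv : m ≠ v := by
    have : s.max' hsne = v := le_antisymm (max'_le _ _ _ hmax) (le_max' _ _ hv)
    exact (this ▸ min'_lt_max'_of_card s hs).ne
  have hmin : (s.erase v).min' hs'ne = m :=
    le_antisymm (min'_le _ _ (mem_erase.2 ⟨hmv, min'_mem s hsne⟩))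
      (le_min' _ _ _ fun y hy ↦ min'_le s y (mem_of_mem_erase hy))
  rw [shadow_initSeg hsne, shadow_initSeg hs'ne, hmin,
    card_initSeg_eq_choose_add (mem_erase.2 ⟨hmv.symm, hv⟩)
      (fun x hx ↦ hmax x (mem_of_mem_erase hx)),
    card_erase_of_mem (min'_mem s hsne), erase_right_comm]

end Finset.Colex

open Finset.Colex in
lemma lovaszBound_card_shadow_initSeg {n r : ℕ} {s : Finset (Fin n)} (hs : #s = r + 1) :
    LovaszBound r #(initSeg s) #(∂ (initSeg s)) := by
  induction r generalizing s with
  | zero =>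
    obtain ⟨x, hx⟩ := card_pos.1 (by omega : 0 < #s)
    refine lovaszBound_zero ?_
    exact_mod_cast card_pos.2 ⟨_, erase_mem_shadow mem_initSeg_self hx⟩
  | succ r ih =>
    have hsne : s.Nonempty := card_pos.1 (by omega)
    set v := s.max' hsne
    have hv : v ∈ s := max'_mem s hsne
    have hmax : ∀ x ∈ s, x ≤ v := fun x hx ↦ le_max' s x hx
    have hs' : #(s.erase v) = r + 1 := by rw [card_erase_of_mem hv, hs]; rfl
    have hrv : r + 1 ≤ v := by
      have := card_le_card (fun x hx ↦ mem_Iic.2 (hmax x hx) : s ⊆ Iic v)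
      rw [Fin.card_Iic, hs] at this
      omega
    have hN : #(initSeg (s.erase v)) ≤ (v : ℕ).choose (r + 1) := by
      rw [← hs', ← Fin.card_Iio, ← card_powersetCard]
      refine card_le_card fun t ht ↦ mem_powersetCard.2 ⟨fun x hx ↦ mem_Iio.2 ?_, ?_⟩
      · exact forall_lt_mono (mem_initSeg.1 ht).2
          (fun y hy ↦ (hmax y (mem_of_mem_erase hy)).lt_of_ne (ne_of_mem_erase hy)) x hx
      · exact (mem_initSeg.1 ht).1.symm
    rw [card_initSeg_eq_choose_add hv hmax, card_shadow_initSeg_eq_choose_add hv hmax (by omega),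
      hs]
    push_cast
    exact (ih hs').cascade (by exact_mod_cast card_pos.2 initSeg_nonempty) hrv
      (by exact_mod_cast hN)

open Finset.Colex in
lemma lovaszBound_card_shadow_fin {n r : ℕ} {𝒜 : Finset (Finset (Fin n))}
    (h𝒜 : (𝒜 : Set (Finset (Fin n))).Sized (r + 1)) : LovaszBound r #𝒜 #(∂ 𝒜) := by
  intro b u hb hu0 hu1 hF
  have hN1 : 1 ≤ #𝒜 := by
    have : (1 : ℝ) ≤ b.choose (r + 1) := by exact_mod_cast Nat.choose_pos hb
    exact_mod_cast (this.trans (choose_le_linChoose b hu0 _)).trans hF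
  obtain ⟨s, hs, hsA⟩ := exists_card_initSeg_eq (r + 1) hN1 (by
    simpa using card_le_card (fun t ht ↦ mem_powersetCard_univ.2 (h𝒜 ht)))
  have hKK : #(∂ (initSeg s)) ≤ #(∂ 𝒜) :=
    kruskal_katona h𝒜 hsA.le (hs ▸ isInitSeg_initSeg)
  refine ((lovaszBound_card_shadow_initSeg hs).mono (by exact_mod_cast hKK))
    b u hb hu0 hu1 ?_
  rwa [hsA]

lemma Finset.shadow_map {α β : Type*} [DecidableEq α] [DecidableEq β] (f : α ↪ β)
    (𝒜 : Finset (Finset α)) :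
    ∂ (𝒜.map (mapEmbedding f).toEmbedding) = (∂ 𝒜).map (mapEmbedding f).toEmbedding := by
  ext t
  simp only [mem_shadow_iff, mem_map, RelEmbedding.coe_toEmbedding, mapEmbedding_apply]
  constructor
  · rintro ⟨_, ⟨s, hs, rfl⟩, b, hb, rfl⟩
    obtain ⟨a, ha, rfl⟩ := mem_map.1 hb
    exact ⟨s.erase a, ⟨s, hs, a, ha, rfl⟩, map_erase f s a⟩
  · rintro ⟨_, ⟨s, hs, a, ha, rfl⟩, rfl⟩
    exact ⟨s.map f, ⟨s, hs, rfl⟩, f a, mem_map_of_mem f ha, (map_erase f s a).symm⟩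

lemma lovaszBound_card_shadow {α : Type*} [Fintype α] [DecidableEq α] {r : ℕ}
    {𝒜 : Finset (Finset α)} (h𝒜 : (𝒜 : Set (Finset α)).Sized (r + 1)) :
    LovaszBound r #𝒜 #(∂ 𝒜) := by
  set e := (mapEmbedding (Fintype.equivFin α).toEmbedding).toEmbedding
  have h := lovaszBound_card_shadow_fin (𝒜 := 𝒜.map e) (by
    intro _ ht
    obtain ⟨s, hs, rfl⟩ := mem_map.1 ht
    simpa [e] using h𝒜 hs)
  rwa [shadow_map, card_map, card_map] at h

lemma linChoose_le_card_of_shadow_subset {α : Type*} [Fintype α] [DecidableEq α]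
    {𝒦 : ℕ → Finset (Finset α)} (hsized : ∀ j, (𝒦 j : Set (Finset α)).Sized j)
    (hshadow : ∀ j, ∂ (𝒦 (j + 1)) ⊆ 𝒦 j) {a ℓ : ℕ} {t : ℝ} (hℓa : ℓ ≤ a) (ht0 : 0 ≤ t)
    (ht1 : t ≤ 1) (hℓ : linChoose a t ℓ ≤ #(𝒦 ℓ)) :
    ∀ j ≤ ℓ, linChoose a t j ≤ #(𝒦 j) := by
  induction ℓ with
  | zero => intro j hj; rwa [Nat.le_zero.1 hj]
  | succ ℓ ih =>
    intro j hj
    rcases hj.eq_or_lt with rfl | hj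
    · exact hℓ
    refine ih (by omega) ?_ j (by omega)
    have := lovaszBound_card_shadow (hsized (ℓ + 1)) a t hℓa ht0 ht1 hℓ
    exact this.trans (by exact_mod_cast card_le_card (hshadow ℓ))

-- `sq_mul_linChoose_le` with `p = a - k + 1`, `m = k`, `D = d`, after clearing binomial factors.
lemma clustering_poly_le {p m t D : ℝ} (hp : 2 ≤ p) (hm : 2 ≤ m) (ht0 : 0 ≤ t)
    (hD : p + m ≤ D) :
    p ^ 2 * (p - 1 + t * (m + 1)) ^ 2 * (D * (D - 1)) ≤
      (D - m) ^ 2 * (p + t * m) ^ 2 * ((p + m - 1) * (p + m - 2 + 2 * t)) := by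
  have h1 : p * D ≤ (D - m) * (p + m) := by nlinarith
  have h2 : p * (D - 1) ≤ (D - m) * (p + m - 1) := by nlinarith
  have hi : p ^ 2 * (D * (D - 1)) ≤ (D - m) ^ 2 * ((p + m) * (p + m - 1)) := by
    nlinarith [mul_le_mul h1 h2 (by nlinarith) (by nlinarith)]
  have hii : (p + m) * (p - 1 + t * (m + 1)) ^ 2 ≤ (p + m - 2 + 2 * t) * (p + t * m) ^ 2 := by
    have key : (p + m - 2 + 2 * t) * (p + t * m) ^ 2 - (p + m) * (p - 1 + t * (m + 1)) ^ 2
        = (1 - t) ^ 2 * ((p + t * m) * (2 * m - 1) - (1 - t) * m) := by ring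
    have : 0 ≤ (p + t * m) * (2 * m - 1) - (1 - t) * m := by
      nlinarith [mul_nonneg ht0 (by linarith : (0 : ℝ) ≤ m)]
    nlinarith [mul_nonneg (sq_nonneg (1 - t)) this]
  calc p ^ 2 * (p - 1 + t * (m + 1)) ^ 2 * (D * (D - 1))
      = (p - 1 + t * (m + 1)) ^ 2 * (p ^ 2 * (D * (D - 1))) := by ring
    _ ≤ (p - 1 + t * (m + 1)) ^ 2 * ((D - m) ^ 2 * ((p + m) * (p + m - 1))) := by gcongr
    _ = ((D - m) ^ 2 * (p + m - 1)) * ((p + m) * (p - 1 + t * (m + 1)) ^ 2) := by ring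
    _ ≤ ((D - m) ^ 2 * (p + m - 1)) * ((p + m - 2 + 2 * t) * (p + t * m) ^ 2) := by
      gcongr
      nlinarith
    _ = (D - m) ^ 2 * (p + t * m) ^ 2 * ((p + m - 1) * (p + m - 2 + 2 * t)) := by ring

lemma sq_mul_linChoose_le {k a d : ℕ} {t : ℝ} (hk : 2 ≤ k) (hka : k + 1 ≤ a) (ht0 : 0 ≤ t)
    (ht1 : t ≤ 1) (had : (a : ℝ) + t ≤ d) :
    (((k : ℝ) + 1) * linChoose a t (k + 1)) ^ 2 * d.choose 2 ≤
      (((d : ℝ) - k) * linChoose a t k) ^ 2 * linChoose a t 2 := by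
  obtain ⟨j, rfl⟩ : ∃ j, k = j + 1 := ⟨k - 1, by omega⟩
  have h2 : linChoose a t 2 = a.choose 2 + t * a := by simp [linChoose_succ_right]
  rw [h2, linChoose_succ_right, linChoose_succ_right, Nat.cast_choose_two, Nat.cast_choose_two]
  have id1 := Nat.cast_succ_mul_choose_succ (R := ℝ) a (j + 1)
  have id2 := Nat.cast_succ_mul_choose_succ (R := ℝ) a j
  push_cast at id1 id2 ⊢
  rcases (show a ≤ d by exact_mod_cast (by linarith : (a : ℝ) ≤ d)).eq_or_lt with rfl | hlt
  · obtain rfl : t = 0 := by linarith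
    simp only [zero_mul, add_zero]
    rw [id1]
  have hka' : (j : ℝ) + 2 ≤ a := by exact_mod_cast hka
  have hj : (1 : ℝ) ≤ j := by exact_mod_cast (by omega : 1 ≤ j)
  have hlt' : (a : ℝ) + 1 ≤ d := by exact_mod_cast hlt
  set X : ℝ := (a.choose (j + 1) : ℝ)
  set P : ℝ := a - j
  have hpoly := clustering_poly_le (p := P) (m := j + 1) (t := t) (D := d)
    (by linarith) (by linarith) ht0 (by linarith)
  have hL : (j + 1 + 1) * (a.choose (j + 1 + 1) + t * X) = X * (P - 1 + t * (j + 1 + 1)) := by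
    linear_combination id1
  have hR : P * (X + t * a.choose j) = X * (P + t * (j + 1)) := by
    linear_combination -t * id2
  refine le_of_mul_le_mul_right ?_ (pow_pos (by linarith : (0 : ℝ) < P) 2)
  calc ((j + 1 + 1) * (a.choose (j + 1 + 1) + t * X)) ^ 2 * (d * (d - 1) / 2) * P ^ 2
      = X ^ 2 * (P ^ 2 * (P - 1 + t * (j + 1 + 1)) ^ 2 * (d * (d - 1))) / 2 := by
        rw [hL]; ring
    _ ≤ X ^ 2 * ((d - (j + 1)) ^ 2 * (P + t * (j + 1)) ^ 2 *
          ((P + (j + 1) - 1) * (P + (j + 1) - 2 + 2 * t))) / 2 := by gcongr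
    _ = ((d - (j + 1)) * (X + t * a.choose j)) ^ 2 * (a * (a - 1) / 2 + t * a) * P ^ 2 := by
        linear_combination (-(d - (j + 1)) ^ 2 * (a * (a - 1) / 2 + t * a) *
          (P * (X + t * a.choose j) + X * (P + t * (j + 1)))) * hR

section NeighborhoodCliques

noncomputable def nbrCliqueFinset {V : Type*} [Fintype V] (G : SimpleGraph V) (u : V) (j : ℕ) :
    Finset (Finset V) :=
  (Set.toFinite {s : Finset V | ↑s ⊆ G.neighborSet u ∧ G.IsNClique j s}).toFinset

variable {V : Type*} [Fintype V] {G : SimpleGraph V} {u : V}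

lemma mem_nbrCliqueFinset {j : ℕ} {s : Finset V} :
    s ∈ nbrCliqueFinset G u j ↔ ↑s ⊆ G.neighborSet u ∧ G.IsNClique j s :=
  Set.Finite.mem_toFinset _

lemma nbrCliqueCount_eq_card (j : ℕ) : nbrCliqueCount G u j = #(nbrCliqueFinset G u j) :=
  Set.ncard_eq_toFinset_card _ _

lemma sized_nbrCliqueFinset (j : ℕ) : (nbrCliqueFinset G u j : Set (Finset V)).Sized j :=
  fun _ hs ↦ (mem_nbrCliqueFinset.1 hs).2.card_eq

lemma shadow_nbrCliqueFinset_subset [DecidableEq V] (j : ℕ) :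
    ∂ (nbrCliqueFinset G u (j + 1)) ⊆ nbrCliqueFinset G u j := by
  intro t ht
  obtain ⟨s, hs, a, ha, rfl⟩ := mem_shadow_iff.1 ht
  obtain ⟨hsN, hsK⟩ := mem_nbrCliqueFinset.1 hs
  exact mem_nbrCliqueFinset.2 ⟨(coe_subset.2 (erase_subset a s)).trans hsN, hsK.erase_of_mem ha⟩

lemma nbrCliqueCount_le_choose (j : ℕ) :
    nbrCliqueCount G u j ≤ (G.neighborSet u).ncard.choose j := by
  classical
  rw [nbrCliqueCount_eq_card, Set.ncard_eq_toFinset_card', ← card_powersetCard]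
  refine card_le_card fun s hs ↦ mem_powersetCard.2 ⟨fun x hx ↦ ?_, ?_⟩
  · exact Set.mem_toFinset.2 ((mem_nbrCliqueFinset.1 hs).1 hx)
  · exact (mem_nbrCliqueFinset.1 hs).2.card_eq

end NeighborhoodCliques

lemma sq_mul_nbrCliqueCount_le {V : Type*} [Fintype V] (G : SimpleGraph V) (u : V) {k : ℕ}
    (hk : 2 ≤ k) (hK : 0 < nbrCliqueCount G u (k + 1)) :
    (((k : ℝ) + 1) * nbrCliqueCount G u (k + 1)) ^ 2 * (G.neighborSet u).ncard.choose 2 ≤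
      (((G.neighborSet u).ncard - k : ℝ) * nbrCliqueCount G u k) ^ 2 * nbrCliqueCount G u 2 := by
  classical
  have hchoose := nbrCliqueCount_le_choose (G := G) (u := u) (k + 1)
  have hkd : k + 1 ≤ (G.neighborSet u).ncard := by
    by_contra! h
    rw [Nat.choose_eq_zero_of_lt h] at hchoose
    omega
  obtain ⟨a, t, hka, ht0, ht1, had, haK⟩ := exists_linChoose_eq hkd
    (T := nbrCliqueCount G u (k + 1)) (by exact_mod_cast hK) (by exact_mod_cast hchoose)
  have hcount : ∀ j ≤ k + 1, linChoose a t j ≤ nbrCliqueCount G u j := by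
    simpa only [← nbrCliqueCount_eq_card] using linChoose_le_card_of_shadow_subset
      sized_nbrCliqueFinset shadow_nbrCliqueFinset_subset hka ht0 ht1
      (by rw [haK, nbrCliqueCount_eq_card])
  have hdk : (k : ℝ) + 1 ≤ (G.neighborSet u).ncard := by exact_mod_cast hkd
  have hdk' : (0 : ℝ) ≤ (G.neighborSet u).ncard - k := by linarith
  have hFk : 0 ≤ linChoose a t k := (Nat.cast_nonneg _).trans (choose_le_linChoose a ht0 k)
  have hF2 : 0 ≤ linChoose a t 2 := (Nat.cast_nonneg _).trans (choose_le_linChoose a ht0 2)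
  rw [← haK]
  calc (((k : ℝ) + 1) * linChoose a t (k + 1)) ^ 2 * (G.neighborSet u).ncard.choose 2
      ≤ (((G.neighborSet u).ncard - k : ℝ) * linChoose a t k) ^ 2 * linChoose a t 2 :=
        sq_mul_linChoose_le hk hka ht0 ht1 had
    _ ≤ (((G.neighborSet u).ncard - k : ℝ) * nbrCliqueCount G u k) ^ 2 *
          nbrCliqueCount G u 2 := by
      gcongr
      · exact hcount k (by omega)
      · exact hcount 2 (by omega)

theorem stmt_11 {V : Type*} [Fintype V] (G : SimpleGraph V) (u : V) (ℓ : ℕ)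
    (hℓ : 3 ≤ ℓ)
    (hpos : 0 < (((G.neighborSet u).ncard : ℝ) - ℓ + 1) * nbrCliqueCount G u (ℓ - 1)) :
    0 ≤ localCC G u ℓ ∧ localCC G u ℓ ≤ Real.sqrt (edgeDensityCC G u) := by
  have hCC : 0 ≤ localCC G u ℓ := div_nonneg (by positivity) hpos.le
  refine ⟨hCC, ?_⟩
  obtain ⟨k, rfl⟩ : ∃ k, ℓ = k + 1 := ⟨ℓ - 1, by omega⟩
  rcases Nat.eq_zero_or_pos (nbrCliqueCount G u (k + 1)) with hK | hK
  · simp [localCC, hK]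
  have hd : 2 ≤ (G.neighborSet u).ncard := by
    have := pos_of_mul_pos_left hpos (Nat.cast_nonneg _)
    have hk : (2 : ℝ) ≤ k := by exact_mod_cast (by omega : 2 ≤ k)
    push_cast at this
    exact_mod_cast (by linarith : (2 : ℝ) ≤ (G.neighborSet u).ncard)
  rw [Real.le_sqrt hCC (by unfold edgeDensityCC; positivity), localCC, edgeDensityCC, div_pow,
    div_le_div_iff₀ (by positivity) (by exact_mod_cast Nat.choose_pos hd)]
  push_cast
  rw [mul_comm _ ((_ : ℝ) ^ 2), show ∀ x : ℝ, x - (k + 1) + 1 = x - k by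
    intro x; ring]
  exact sq_mul_nbrCliqueCount_le G u (by omega) hK
end

section
/- Let G be a finite simple graph with global ℓth-order clustering coefficient C_ℓ. Then the sum over all vertices v of the number of ℓ-cliques cut by the 1-hop neighborhood partition (N'_v, complement), i.e., Σ_v cut_{K_ℓ}(N'_v), is at most (1 - C_ℓ)·|W_ℓ|, where |W_ℓ| is the total number of ℓ-wedges in G. -/
/-- The set of `ℓ`-wedges of `G`: pairs of an `ℓ`-clique `p.1` and an adjacent edge, given
by the shared vertex `p.2.1 ∈ p.1` and an outside endpoint `p.2.2 ∉ p.1`. -/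
def wedges {V : Type*} (G : SimpleGraph V) (ℓ : ℕ) : Set (Finset V × V × V) :=
  {p | G.IsNClique ℓ p.1 ∧ p.2.1 ∈ p.1 ∧ p.2.2 ∉ p.1 ∧ G.Adj p.2.1 p.2.2}

/-- The set of closed `ℓ`-wedges: the clique together with the outside endpoint forms an
`(ℓ+1)`-clique. -/
def closedWedges {V : Type*} [DecidableEq V] (G : SimpleGraph V) (ℓ : ℕ) :
    Set (Finset V × V × V) :=
  wedges G ℓ ∩ {p | G.IsNClique (ℓ + 1) (insert p.2.2 p.1)}

/-- The global `ℓ`th-order clustering coefficient: the fraction of `ℓ`-wedges that are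
closed. -/
noncomputable def globalCC {V : Type*} [Fintype V] [DecidableEq V]
    (G : SimpleGraph V) (ℓ : ℕ) : ℝ :=
  ((closedWedges G ℓ).ncard : ℝ) / ((wedges G ℓ).ncard : ℝ)

/-- The number of `ℓ`-cliques cut by the partition `(N'_v, complement)`, where
`N'_v = {v} ∪ neighbors(v)`. -/
noncomputable def nbrCut {V : Type*} [Fintype V] (G : SimpleGraph V) (ℓ : ℕ) (v : V) : ℕ :=
  {s : Finset V | G.IsNClique ℓ s ∧
    (∃ x ∈ s, x ∈ insert v (G.neighborSet v)) ∧
    (∃ x ∈ s, x ∉ insert v (G.neighborSet v))}.ncard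

/-!
If an `ℓ`-clique `s` is cut by `N'_v`, then `v ∉ s`, since otherwise `s ⊆ N'_v`. Any `x ∈ s ∩ N'_v`
is then adjacent to `v`, and `(s, x, v)` is an open wedge: a vertex of `s` outside `N'_v` is not
adjacent to `v`. As `s` and `v` are read off the wedge, the cut pairs `(v, s)` are at most as many
as the open wedges, which number `(1 - C_ℓ) |W_ℓ|`.
-/

theorem Set.ncard_eq_sum_ncard_fiberwise {α β : Type*} [Finite α] [Fintype β] (S : Set α)
    (f : α → β) : S.ncard = ∑ b, {a ∈ S | f a = b}.ncard := by
  classical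
  have := Fintype.ofFinite α
  rw [Set.ncard_eq_toFinset_card' S, Finset.card_eq_sum_card_fiberwise (f := f) (t := .univ)
    (fun _ _ => Finset.mem_coe.2 (Finset.mem_univ _))]
  refine Finset.sum_congr rfl fun b _ => ?_
  rw [Set.ncard_eq_toFinset_card']
  congr 1
  ext a
  simp

section

variable {V : Type*}

theorem closedWedges_subset_wedges [DecidableEq V] (G : SimpleGraph V) (ℓ : ℕ) :
    closedWedges G ℓ ⊆ wedges G ℓ :=
  Set.inter_subset_left

theorem one_sub_globalCC_mul [Fintype V] [DecidableEq V] (G : SimpleGraph V) (ℓ : ℕ) :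
    (1 - globalCC G ℓ) * ((wedges G ℓ).ncard : ℝ) = (wedges G ℓ \ closedWedges G ℓ).ncard := by
  have hsub := closedWedges_subset_wedges G ℓ
  rw [Set.ncard_sdiff hsub, Nat.cast_sub (Set.ncard_le_ncard hsub), globalCC]
  rcases eq_or_ne (wedges G ℓ).ncard 0 with h | h
  · -- no wedges: `globalCC G ℓ = 0 / 0 = 0` and both sides vanish
    have : (closedWedges G ℓ).ncard = 0 := Nat.eq_zero_of_le_zero (h ▸ Set.ncard_le_ncard hsub)
    simp [h, this]
  · rw [one_sub_mul, div_mul_cancel₀ _ (by exact_mod_cast h)]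

def cutCliques (G : SimpleGraph V) (ℓ : ℕ) (v : V) : Set (Finset V) :=
  {s | G.IsNClique ℓ s ∧
    (∃ x ∈ s, x ∈ insert v (G.neighborSet v)) ∧
    (∃ x ∈ s, x ∉ insert v (G.neighborSet v))}

theorem nbrCut_eq_ncard_cutCliques [Fintype V] (G : SimpleGraph V) (ℓ : ℕ) (v : V) :
    nbrCut G ℓ v = (cutCliques G ℓ v).ncard :=
  rfl

theorem exists_open_wedge_of_mem_cutCliques [DecidableEq V] {G : SimpleGraph V} {ℓ : ℕ}
    {v : V} {s : Finset V} (hs : s ∈ cutCliques G ℓ v) :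
    ∃ x, (s, x, v) ∈ wedges G ℓ \ closedWedges G ℓ := by
  obtain ⟨hclique, ⟨x, hxs, hxN⟩, ⟨y, hys, hyN⟩⟩ := hs
  have hvs : v ∉ s := by
    intro hvs
    rcases eq_or_ne v y with rfl | hvy
    · exact hyN (Set.mem_insert v _)
    · exact hyN (Set.mem_insert_of_mem v (hclique.isClique hvs hys hvy))
  have hxv : G.Adj x v := by
    rcases hxN with rfl | hxv
    · exact absurd hxs hvs
    · exact hxv.symm
  refine ⟨x, ⟨hclique, hxs, hvs, hxv⟩, fun ⟨_, hclosed⟩ => hyN ?_⟩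
  have hvy : v ≠ y := fun h => hvs (h ▸ hys)
  exact Set.mem_insert_of_mem v
    (hclosed.isClique (Finset.mem_insert_self v s) (Finset.mem_insert_of_mem hys) hvy)

theorem nbrCut_le_ncard_open_wedges_at [Fintype V] [DecidableEq V] (G : SimpleGraph V) (ℓ : ℕ)
    (v : V) : nbrCut G ℓ v ≤ {p ∈ wedges G ℓ \ closedWedges G ℓ | p.2.2 = v}.ncard := by
  rw [nbrCut_eq_ncard_cutCliques]
  refine (Set.ncard_le_ncard (t := Prod.fst '' _) ?_).trans (Set.ncard_image_le (Set.toFinite _))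
  intro s hs
  obtain ⟨x, hx⟩ := exists_open_wedge_of_mem_cutCliques hs
  exact ⟨(s, x, v), ⟨hx, rfl⟩, rfl⟩

end

theorem stmt_16_general {V : Type*} [Fintype V] [DecidableEq V] (G : SimpleGraph V) (ℓ : ℕ) :
    (∑ v : V, (nbrCut G ℓ v : ℝ)) ≤ (1 - globalCC G ℓ) * ((wedges G ℓ).ncard : ℝ) := by
  rw [one_sub_globalCC_mul,
    Set.ncard_eq_sum_ncard_fiberwise (wedges G ℓ \ closedWedges G ℓ) (·.2.2)]
  push_cast
  exact Finset.sum_le_sum fun v _ => by exact_mod_cast nbrCut_le_ncard_open_wedges_at G ℓ v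

theorem stmt_16 {V : Type*} [Fintype V] [DecidableEq V] (G : SimpleGraph V) (ℓ : ℕ)
    (hW : 0 < (wedges G ℓ).ncard) :
    (∑ v : V, (nbrCut G ℓ v : ℝ)) ≤ (1 - globalCC G ℓ) * ((wedges G ℓ).ncard : ℝ) :=
  stmt_16_general G ℓ
end

section
/- Let ρ_1 ≥ ρ_2 ≥ ... ≥ ρ_r be nonnegative reals with Σ_i ρ_i = m, and let z_1, ..., z_r be nonnegative integers with z_i ≤ i for all i and Σ_i z_i ≤ 3τ. Then Σ_i ρ_i·z_i = O(m·√τ); more precisely, Σ_i ρ_i·z_i ≤ m·(J+1) for some J with J(J+1)/2 ≤ 3τ + J, hence Σ_i ρ_i·z_i ≤ C·m·√τ for an absolute constant C (for τ ≥ 1). -/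
/-!
Antitonicity gives `(i + 1) ρᵢ ≤ m`, so `∑ ρᵢ zᵢ ≤ m ∑ zᵢ / (i + 1)`, and it remains to bound
`∑ zᵢ / (i + 1)` by `K = J + 1` whenever `2 ∑ zᵢ ≤ K (K + 1)`. Since `zᵢ ≤ i + 1`, termwise
`zᵢ / (i + 1) ≤ (zᵢ + (K - (i + 1))⁺) / K`, and the slack terms `(K - (i + 1))⁺` add up to at
most `K (K - 1) / 2`. The choice `J = ⌊√(6τ)⌋` meets both requirements and `J + 1 ≤ 4 √τ`.
-/

open Finset

theorem succ_mul_le_sum_of_antitone {α : Type*} [Semiring α] [PartialOrder α]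
    [IsOrderedRing α] {r : ℕ} {ρ : Fin r → α} (hρ0 : ∀ i, 0 ≤ ρ i) (hρ : Antitone ρ)
    (i : Fin r) : ((i : ℕ) + 1 : α) * ρ i ≤ ∑ j, ρ j := by
  have h := card_nsmul_le_sum (Iic i) ρ (ρ i) fun j hj => hρ (mem_Iic.mp hj)
  rw [Fin.card_Iic, nsmul_eq_mul, Nat.cast_add_one] at h
  exact h.trans (sum_le_sum_of_subset_of_nonneg (subset_univ _) fun j _ _ => hρ0 j)

theorem mul_le_mul_add_tsub {z n K : ℕ} (hz : z ≤ n) : K * z ≤ n * (z + (K - n)) := by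
  rcases le_total K n with hKn | hnK
  · rw [Nat.sub_eq_zero_of_le hKn, add_zero]
    exact Nat.mul_le_mul_right z hKn
  · obtain ⟨d, rfl⟩ := Nat.exists_eq_add_of_le hnK
    rw [Nat.add_sub_cancel_left]
    nlinarith

theorem two_mul_sum_tsub_succ_add_le (r K : ℕ) :
    2 * ∑ i : Fin r, (K - ((i : ℕ) + 1)) + K ≤ K * K := by
  have hreflect : ∑ i ∈ range K, (K - (i + 1)) = ∑ i ∈ range K, i := by
    rw [← sum_range_reflect]
    exact sum_congr rfl fun i hi => by have := mem_range.mp hi; omega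
  have htrunc : ∑ i ∈ range r, (K - (i + 1)) ≤ ∑ i ∈ range K, (K - (i + 1)) := by
    rw [← sum_filter_of_ne (p := (· < K)) fun i _ h => by omega]
    exact sum_le_sum_of_subset fun i hi => by
      simp only [mem_filter, mem_range] at hi ⊢; exact hi.2
  have hgauss := sum_range_id_mul_two K
  rw [Fin.sum_univ_eq_sum_range (fun i => K - (i + 1))]
  rcases K with _ | K
  · simp
  · simp only [Nat.add_sub_cancel] at hgauss
    nlinarith

theorem sum_mul_le_sum_mul_of_antitone {α : Type*} [Field α] [LinearOrder α]
    [IsStrictOrderedRing α] {r : ℕ} {ρ : Fin r → α} (hρ0 : ∀ i, 0 ≤ ρ i) (hρ : Antitone ρ)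
    {z : Fin r → ℕ} (hz : ∀ i, z i ≤ (i : ℕ) + 1) {K : ℕ} (hK : 0 < K)
    (hzK : 2 * ∑ i, z i ≤ K * (K + 1)) :
    ∑ i, ρ i * z i ≤ (∑ i, ρ i) * K := by
  set m := ∑ i, ρ i
  have hcount : ∑ i, z i + ∑ i : Fin r, (K - ((i : ℕ) + 1)) ≤ K * K := by
    have := two_mul_sum_tsub_succ_add_le r K
    nlinarith
  refine le_of_mul_le_mul_left ?_ (Nat.cast_pos.mpr hK : (0 : α) < K)
  calc (K : α) * ∑ i, ρ i * z i = ∑ i, ρ i * (K * z i : ℕ) := by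
        simp only [mul_sum, Nat.cast_mul]; exact sum_congr rfl fun i _ => by ring
    _ ≤ ∑ i : Fin r, ρ i * (((i : ℕ) + 1) * (z i + (K - ((i : ℕ) + 1))) : ℕ) :=
        sum_le_sum fun i _ =>
          mul_le_mul_of_nonneg_left (Nat.cast_le.mpr (mul_le_mul_add_tsub (hz i))) (hρ0 i)
    _ = ∑ i : Fin r, ((i : ℕ) + 1 : α) * ρ i * (z i + (K - ((i : ℕ) + 1)) : ℕ) :=
        sum_congr rfl fun i _ => by rw [Nat.cast_mul, Nat.cast_add_one]; ring
    _ ≤ ∑ i : Fin r, m * (z i + (K - ((i : ℕ) + 1)) : ℕ) :=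
        sum_le_sum fun i _ =>
          mul_le_mul_of_nonneg_right (succ_mul_le_sum_of_antitone hρ0 hρ i) (Nat.cast_nonneg _)
    _ = m * (∑ i, z i + ∑ i : Fin r, (K - ((i : ℕ) + 1)) : ℕ) := by
        rw [← mul_sum, ← Nat.cast_sum, sum_add_distrib]
    _ ≤ m * (K * K : ℕ) :=
        mul_le_mul_of_nonneg_left (Nat.cast_le.mpr hcount) (sum_nonneg fun i _ => hρ0 i)
    _ = K * (m * K) := by push_cast; ring

theorem nat_sqrt_six_mul_add_one_le {n : ℕ} (hn : 1 ≤ n) :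
    (Nat.sqrt (6 * n) : ℝ) + 1 ≤ 4 * √n := by
  set s := √(n : ℝ)
  have hsq : ((Nat.sqrt (6 * n) * Nat.sqrt (6 * n) : ℕ) : ℝ) ≤ (6 * n : ℕ) :=
    Nat.cast_le.mpr (Nat.sqrt_le _)
  have hs : s ^ 2 = n := Real.sq_sqrt (Nat.cast_nonneg n)
  have hs1 : 1 ≤ s := Real.one_le_sqrt.mpr (Nat.one_le_cast.mpr hn)
  push_cast at hsq
  have : (Nat.sqrt (6 * n) : ℝ) ≤ 3 * s := by nlinarith
  linarith

/-- Key combinatorial bound for the fast temporal triangle counting algorithm: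
if `ρ_1 ≥ ... ≥ ρ_r ≥ 0` sum to `m`, and nonnegative integers `z_i ≤ i` satisfy
`Σ z_i ≤ 3τ`, then `Σ ρ_i z_i ≤ m(J+1)` for some `J` with `J(J+1)/2 ≤ 3τ + J`,
and hence `Σ ρ_i z_i ≤ C·m·√τ` for an absolute constant `C` (when `τ ≥ 1`).
(Indices are 0-based here, so `z_i ≤ i` becomes `z i ≤ i + 1`.) -/
theorem stmt_19 :
    ∃ C : ℝ, 0 < C ∧
      ∀ (r : ℕ) (ρ : Fin r → ℝ) (z : Fin r → ℕ) (m : ℝ) (τ : ℕ),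
        (∀ i, 0 ≤ ρ i) →
        (∀ i j : Fin r, i ≤ j → ρ j ≤ ρ i) →
        (∑ i, ρ i) = m →
        (∀ i : Fin r, z i ≤ (i : ℕ) + 1) →
        (∑ i, z i) ≤ 3 * τ →
        1 ≤ τ →
        (∃ J : ℕ, J * (J + 1) ≤ 2 * (3 * τ + J) ∧
            (∑ i, ρ i * (z i : ℝ)) ≤ m * ((J : ℝ) + 1)) ∧
          (∑ i, ρ i * (z i : ℝ)) ≤ C * m * Real.sqrt (τ : ℝ) := by
  refine ⟨4, by norm_num, fun r ρ z m τ hρ0 hρ hm hz hzτ hτ => ?_⟩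
  set J := Nat.sqrt (6 * τ)
  have hJ_le : J * J ≤ 6 * τ := Nat.sqrt_le _
  have hJ_lt : 6 * τ < (J + 1) * (J + 1) := Nat.lt_succ_sqrt _
  have hkey : ∑ i, ρ i * (z i : ℝ) ≤ m * ((J : ℝ) + 1) := by
    have := sum_mul_le_sum_mul_of_antitone hρ0 hρ hz J.succ_pos (by nlinarith)
    rwa [hm, Nat.cast_succ] at this
  refine ⟨⟨J, by nlinarith, hkey⟩, ?_⟩
  have hm0 : 0 ≤ m := hm ▸ sum_nonneg fun i _ => hρ0 i
  calc ∑ i, ρ i * (z i : ℝ) ≤ m * ((J : ℝ) + 1) := hkey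
    _ ≤ m * (4 * √τ) := mul_le_mul_of_nonneg_left (nat_sqrt_six_mul_add_one_le hτ) hm0
    _ = 4 * m * √τ := by ring
end
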